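/- arXiv:1506.05679 — 6 statements merged into one kernel-verified Lean document; each statement's English description precedes it below -/
import Mathlib

section
/- If g is an element of GL(4,ℤ) of finite order d, then d belongs to the set {1, 2, 3, 4, 5, 6, 8, 10, 12}. -/
/-!
The rational minimal polynomial `μ` of `g` divides `X ^ d - 1`, so it is the product of the
distinct cyclotomic polynomials `Φ_e` dividing it, and `d` is the lcm of the indices `e` occurring.
As `μ` divides the characteristic polynomial, the totients of these indices sum to `deg μ ≤ 4`.
Finally `φ e ≤ 4` forces `e ∣ 120`, hence `e ∈ {1, 2, 3, 4, 5, 6, 8, 10, 12}`, and a finite check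
over the subsets of this set with totient sum at most `4` shows that their lcm lies in it too.
-/

open Polynomial
open scoped Nat

open scoped Classical in
theorem Polynomial.eq_prod_cyclotomic_of_dvd_X_pow_sub_one {p : ℚ[X]} {n : ℕ} (hn : 0 < n)
    (hp : p.Monic) (hdvd : p ∣ X ^ n - 1) :
    p = ∏ e ∈ n.divisors with cyclotomic e ℚ ∣ p, cyclotomic e ℚ := by
  have hcop : (n.divisors : Set ℕ).Pairwise (Function.onFun IsCoprime (cyclotomic · ℚ)) :=
    fun _ _ _ _ hab => cyclotomic.isCoprime_rat hab
  have hprod_dvd : ∏ e ∈ n.divisors with cyclotomic e ℚ ∣ p, cyclotomic e ℚ ∣ p :=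
    Finset.prod_dvd_of_coprime (hcop.mono (Finset.coe_subset.2 (Finset.filter_subset _ _)))
      fun e he => (Finset.mem_filter.1 he).2
  have hcop_rest : IsCoprime p (∏ e ∈ n.divisors with ¬cyclotomic e ℚ ∣ p, cyclotomic e ℚ) := by
    refine IsCoprime.prod_right fun e he => ?_
    obtain ⟨he, hndvd⟩ := Finset.mem_filter.1 he
    exact ((cyclotomic.irreducible_rat (Nat.pos_of_mem_divisors he)).coprime_iff_not_dvd.2
      hndvd).symm
  have hdvd_prod : p ∣ ∏ e ∈ n.divisors with cyclotomic e ℚ ∣ p, cyclotomic e ℚ := by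
    refine hcop_rest.dvd_of_dvd_mul_right ?_
    rwa [Finset.prod_filter_mul_prod_filter_not, prod_cyclotomic_eq_X_pow_sub_one hn]
  exact eq_of_monic_of_associated hp
    (monic_prod_of_monic _ _ fun e _ => cyclotomic.monic e ℚ)
    (associated_of_dvd_dvd hdvd_prod hprod_dvd)

theorem exists_orderOf_eq_lcm_and_sum_totient_eq_natDegree_minpoly {A : Type*} [Ring A]
    [Algebra ℚ A] {a : A} (ha : 0 < orderOf a) :
    ∃ S ⊆ (orderOf a).divisors, orderOf a = S.lcm id ∧
      ∑ e ∈ S, φ e = (minpoly ℚ a).natDegree := by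
  classical
  have pow_eq_one_iff_dvd (k : ℕ) : a ^ k = 1 ↔ minpoly ℚ a ∣ X ^ k - 1 := by
    simp [minpoly.dvd_iff, sub_eq_zero]
  have hint : IsIntegral ℚ a :=
    ⟨X ^ orderOf a - 1, monic_X_pow_sub_C 1 ha.ne', by simp [pow_orderOf_eq_one]⟩
  have hμ := eq_prod_cyclotomic_of_dvd_X_pow_sub_one ha (minpoly.monic hint)
    ((pow_eq_one_iff_dvd _).1 (pow_orderOf_eq_one a))
  set S := (orderOf a).divisors.filter (cyclotomic · ℚ ∣ minpoly ℚ a)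
  have hlcm_dvd : S.lcm id ∣ orderOf a :=
    Finset.lcm_dvd fun e he => Nat.dvd_of_mem_divisors (Finset.mem_filter.1 he).1
  have hlcm_pos : 0 < S.lcm id := Nat.pos_of_dvd_of_pos hlcm_dvd ha
  have hdvd_lcm : orderOf a ∣ S.lcm id := by
    refine orderOf_dvd_of_pow_eq_one ((pow_eq_one_iff_dvd _).2 ?_)
    rw [hμ, ← prod_cyclotomic_eq_X_pow_sub_one hlcm_pos]
    exact Finset.prod_dvd_prod_of_subset _ _ _ fun e he =>
      Nat.mem_divisors.2 ⟨Finset.dvd_lcm he, hlcm_pos.ne'⟩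
  refine ⟨S, Finset.filter_subset _ _, Nat.dvd_antisymm hdvd_lcm hlcm_dvd, ?_⟩
  rw [hμ, natDegree_prod_of_monic _ _ fun e _ => cyclotomic.monic e ℚ]
  exact Finset.sum_congr rfl fun e _ => (natDegree_cyclotomic e ℚ).symm

theorem Matrix.natDegree_minpoly_le {n K : Type*} [Fintype n] [DecidableEq n] [Field K]
    (M : Matrix n n K) : (minpoly K M).natDegree ≤ Fintype.card n :=
  M.charpoly_natDegree_eq_dim ▸
    natDegree_le_of_dvd M.minpoly_dvd_charpoly M.charpoly_monic.ne_zero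

theorem Matrix.orderOf_map_of_injective {n R S : Type*} [Fintype n] [DecidableEq n] [Semiring R]
    [Semiring S] (f : R →+* S) (hf : Function.Injective f) (M : Matrix n n R) :
    orderOf (M.map f) = orderOf M :=
  orderOf_injective f.mapMatrix.toMonoidHom (Matrix.map_injective hf) M

theorem Nat.dvd_120_of_totient_le_four {e : ℕ} (he : 0 < e) (h : φ e ≤ 4) : e ∣ 120 := by
  refine (Nat.dvd_iff_prime_pow_dvd_dvd 120 e).2 fun p k hp hpk => ?_
  rcases Nat.eq_zero_or_pos k with rfl | hk
  · simp
  have htot : p ^ (k - 1) * (p - 1) ≤ 4 := by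
    rw [← Nat.totient_prime_pow hp hk]
    exact (Nat.le_of_dvd (Nat.totient_pos.2 he) (Nat.totient_dvd_of_dvd hpk)).trans h
  have hp1 : p - 1 ≤ 4 := (Nat.le_mul_of_pos_left _ (Nat.pow_pos hp.pos)).trans htot
  have hpow : 2 ^ (k - 1) ≤ 2 ^ 2 :=
    (Nat.pow_le_pow_left hp.two_le _).trans
      ((Nat.le_mul_of_pos_right _ (Nat.sub_pos_of_lt hp.one_lt)).trans htot)
  have hk3 : k ≤ 3 := by
    have := (Nat.pow_le_pow_iff_right (by norm_num)).1 hpow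
    omega
  have hp5 : p ≤ 5 := by omega
  interval_cases p <;> interval_cases k <;> revert hp htot <;> decide

theorem Nat.mem_of_totient_le_four {e : ℕ} (he : 0 < e) (h : φ e ≤ 4) :
    e ∈ ({1, 2, 3, 4, 5, 6, 8, 10, 12} : Finset ℕ) := by
  have key : ∀ e ∈ Nat.divisors 120, φ e ≤ 4 →
      e ∈ ({1, 2, 3, 4, 5, 6, 8, 10, 12} : Finset ℕ) := by
    decide
  exact key e (Nat.mem_divisors.2 ⟨Nat.dvd_120_of_totient_le_four he h, by norm_num⟩) h

set_option maxRecDepth 20000 in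
theorem Finset.lcm_mem_of_sum_totient_le_four {S : Finset ℕ} (hS : 0 ∉ S) (h : ∑ e ∈ S, φ e ≤ 4) :
    S.lcm id ∈ ({1, 2, 3, 4, 5, 6, 8, 10, 12} : Finset ℕ) := by
  have key : ∀ S ∈ ({1, 2, 3, 4, 5, 6, 8, 10, 12} : Finset ℕ).powerset, ∑ e ∈ S, φ e ≤ 4 →
      S.lcm id ∈ ({1, 2, 3, 4, 5, 6, 8, 10, 12} : Finset ℕ) := by
    decide
  refine key S (Finset.mem_powerset.2 fun e he => ?_) h
  exact Nat.mem_of_totient_le_four (Nat.pos_of_ne_zero (ne_of_mem_of_not_mem he hS))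
    ((Finset.single_le_sum (fun _ _ => Nat.zero_le _) he).trans h)

/-- If `g` is an element of `GL(4, ℤ)` of finite order `d`, then
`d ∈ {1, 2, 3, 4, 5, 6, 8, 10, 12}`. -/
theorem stmt_0 (g : Matrix.GeneralLinearGroup (Fin 4) ℤ) (d : ℕ)
    (hd : orderOf g = d) (hd0 : 0 < d) :
    d ∈ ({1, 2, 3, 4, 5, 6, 8, 10, 12} : Set ℕ) := by
  set M := (g : Matrix (Fin 4) (Fin 4) ℤ).map (Int.castRingHom ℚ)
  have hM : orderOf M = d := by
    rw [Matrix.orderOf_map_of_injective _ Int.cast_injective, orderOf_units, hd]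
  obtain ⟨S, hSd, hlcm, hsum⟩ :=
    exists_orderOf_eq_lcm_and_sum_totient_eq_natDegree_minpoly (hM ▸ hd0)
  have hS0 : 0 ∉ S := fun h => (Nat.pos_of_mem_divisors (hSd h)).false
  have hsum4 : ∑ e ∈ S, φ e ≤ 4 := hsum ▸ M.natDegree_minpoly_le
  rw [← hM, hlcm]
  simpa using Finset.lcm_mem_of_sum_totient_le_four hS0 hsum4
end

section
/- Let g ∈ GL(4,ℤ) have finite order d, and suppose that the induced automorphism ⋀²g of ⋀²ℤ⁴ has prime order p. Then p ∈ {2, 3, 5} and d ∈ {2, 3, 4, 5, 6, 10}. -/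
set_option synthInstance.maxHeartbeats 1000000
set_option maxHeartbeats 1000000

open ExteriorAlgebra

/-- The image of the `n`-th exterior power under the algebra morphism induced by a linear map
lands in the `n`-th exterior power. -/
lemma map_mem_exteriorPower {R M N : Type*} [CommRing R] [AddCommGroup M] [Module R M]
    [AddCommGroup N] [Module R N] (f : M →ₗ[R] N) (n : ℕ) {x : ExteriorAlgebra R M}
    (hx : x ∈ ⋀[R]^n M) : ExteriorAlgebra.map f x ∈ ⋀[R]^n N := by
  rw [← ExteriorAlgebra.ιMulti_span_fixedDegree] at hx ⊢
  induction hx using Submodule.span_induction with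
  | mem y hy =>
      obtain ⟨m, rfl⟩ := hy
      rw [ExteriorAlgebra.map_apply_ιMulti]
      exact Submodule.subset_span ⟨f ∘ m, rfl⟩
  | zero => simp
  | add a b _ _ ha hb => rw [map_add]; exact Submodule.add_mem _ ha hb
  | smul r a _ ha => rw [map_smul]; exact Submodule.smul_mem _ r ha

/-- The `n`-th exterior power of a linear map. -/
noncomputable def extPowMap {R M N : Type*} [CommRing R] [AddCommGroup M] [Module R M]
    [AddCommGroup N] [Module R N] (n : ℕ) (f : M →ₗ[R] N) : ⋀[R]^n M →ₗ[R] ⋀[R]^n N :=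
  LinearMap.restrict (ExteriorAlgebra.map f).toLinearMap
    (fun _ hx => map_mem_exteriorPower f n hx)

/-! Because `⋀²` is multiplicative, `p ∣ d` and `⋀²(g ^ p) = 1`. In rank at least three the
kernel of `⋀²` is `{±1}`: a matrix all of whose `2 × 2` minors agree with those of the identity
is diagonal with entries `aᵢ` satisfying `aᵢ aⱼ = 1` for `i ≠ j`. Hence `d ∣ 2p`. A power of `g`
has order `p` in `GL(4, ℚ)`; its minimal polynomial divides `X ^ p - 1 = Φₚ · (X - 1)` but not
`X - 1`, so the irreducible `Φₚ`, of degree `p - 1`, divides the characteristic polynomial and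
`p - 1 ≤ 4`. -/

lemma Fintype.exists_ne_ne_of_three_le_card {α : Type*} [Fintype α] [DecidableEq α]
    (hα : 3 ≤ Fintype.card α) (a b : α) : ∃ c, c ≠ a ∧ c ≠ b := by
  obtain ⟨c, -, hc⟩ := Finset.exists_mem_notMem_of_card_lt_card
    (s := {a, b}) (t := Finset.univ) (Finset.card_le_two.trans_lt hα)
  exact ⟨c, by simpa [not_or] using hc⟩

namespace Matrix

lemma det_submatrix_fin_two {m n R : Type*} [CommRing R] (A : Matrix m n R) (i j : m) (k l : n) :
    (A.submatrix ![i, j] ![k, l]).det = A i k * A j l - A i l * A j k := by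
  rw [det_fin_two]
  simp

theorem mul_self_eq_one_of_det_submatrix_fin_two_eq {n R : Type*} [Fintype n] [DecidableEq n]
    [CommRing R] (hn : 3 ≤ Fintype.card n) (A : Matrix n n R)
    (hA : ∀ i j k l, (A.submatrix ![i, j] ![k, l]).det =
      ((1 : Matrix n n R).submatrix ![i, j] ![k, l]).det) :
    A * A = 1 := by
  simp only [det_submatrix_fin_two, one_apply] at hA
  have hoff : ∀ r c, r ≠ c → A r c = 0 := by
    intro r c hrc
    obtain ⟨c', hc'c, hc'r⟩ := Fintype.exists_ne_ne_of_three_le_card hn c r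
    have H1 := hA c' r c c'
    have H2 := hA c r c c'
    have H3 := hA c c' c c'
    simp [hc'c, hrc, Ne.symm hc'c, Ne.symm hc'r] at H1 H2 H3
    linear_combination -A c c * H1 + A c' c * H2 - A r c * H3
  have hdiag : ∀ i j, i ≠ j → A i i * A j j = 1 := by
    intro i j hij
    simpa [hij, hoff i j hij] using hA i j i j
  have hsq : ∀ i, A i i * A i i = 1 := by
    intro i
    obtain ⟨j, hji, -⟩ := Fintype.exists_ne_ne_of_three_le_card hn i i
    obtain ⟨k, hki, hkj⟩ := Fintype.exists_ne_ne_of_three_le_card hn i j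
    linear_combination A i i * A k k * hdiag i j hji.symm + hdiag i k hki.symm
      - A i i * A i i * hdiag j k hkj.symm
  have hA_diag : A = diagonal fun i => A i i := by
    ext i j
    by_cases h : i = j
    · simp [h]
    · simp [h, hoff i j h]
  rw [hA_diag, diagonal_mul_diagonal, ← diagonal_one]
  exact congrArg diagonal (funext hsq)

open Polynomial in
theorem prime_le_card_add_one_of_orderOf_eq {n : Type*} [Fintype n] [DecidableEq n]
    {M : Matrix n n ℚ} {p : ℕ} (hp : p.Prime) (hM : orderOf M = p) :
    p ≤ Fintype.card n + 1 := by
  have := Fact.mk hp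
  have hM1 : M ≠ 1 := by
    rintro rfl
    exact hp.one_lt.ne (orderOf_one.symm.trans hM)
  have hMp : aeval M (X ^ p - 1 : ℚ[X]) = 0 := by
    simp [← hM, pow_orderOf_eq_one]
  have hcyc : cyclotomic p ℚ ∣ M.charpoly := by
    refine dvd_trans ?_ M.minpoly_dvd_charpoly
    by_contra hndvd
    have hcop : IsCoprime (cyclotomic p ℚ) (minpoly ℚ M) :=
      (cyclotomic.irreducible_rat hp.pos).coprime_iff_not_dvd.2 hndvd
    have hdvd : minpoly ℚ M ∣ X - 1 := by
      refine hcop.symm.dvd_of_dvd_mul_left ?_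
      rw [cyclotomic_prime_mul_X_sub_one]
      exact minpoly.dvd ℚ M hMp
    have := aeval_eq_zero_of_dvd_aeval_eq_zero hdvd (minpoly.aeval ℚ M)
    exact hM1 (by simpa [sub_eq_zero] using this)
  have hdeg := natDegree_le_of_dvd hcyc M.charpoly_monic.ne_zero
  rw [natDegree_cyclotomic, Nat.totient_prime hp, M.charpoly_natDegree_eq_dim] at hdeg
  omega

end Matrix

namespace exteriorPower

variable {R M : Type*} [CommRing R] [AddCommGroup M] [Module R M]

lemma extPowMap_eq_map {N : Type*} [AddCommGroup N] [Module R N] (n : ℕ) (f : M →ₗ[R] N) :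
    extPowMap n f = map n f := by
  ext v
  simp only [LinearMap.compAlternatingMap_apply, map_apply_ιMulti, ιMulti_apply_coe]
  exact ExteriorAlgebra.map_apply_ιMulti f v

variable (R M) in
noncomputable def mapMonoidHom (n : ℕ) : Module.End R M →* Module.End R (⋀[R]^n M) where
  toFun := map n
  map_one' := map_id
  map_mul' f g := map_comp g f

theorem mul_self_eq_one_of_map_two_eq_id {ι : Type*} [Fintype ι] [DecidableEq ι]
    (hι : 3 ≤ Fintype.card ι) (L : Module.End R (ι → R)) (hL : map 2 L = LinearMap.id) :
    L * L = 1 := by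
  have hminor : ∀ i j k l, ((LinearMap.toMatrix' L).submatrix ![i, j] ![k, l]).det
      = ((1 : Matrix ι ι R).submatrix ![i, j] ![k, l]).det := by
    intro i j k l
    have h := congrArg (pairingDual R (ι → R) 2 (ιMulti R 2 ![LinearMap.proj i, LinearMap.proj j]))
      (LinearMap.congr_fun hL (ιMulti R 2 ![Pi.single k 1, Pi.single l 1]))
    simp only [map_apply_ιMulti, pairingDual_ιMulti_ιMulti, Matrix.det_fin_two, Matrix.of_apply,
      Matrix.cons_val_zero, Matrix.cons_val_one, Matrix.cons_val_fin_one, Function.comp_apply,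
      LinearMap.coe_proj, Function.eval, LinearMap.id_coe, id_eq, Pi.single_apply] at h
    simp only [Matrix.det_submatrix_fin_two, LinearMap.toMatrix'_apply, Matrix.one_apply]
    linear_combination h
  apply LinearMap.toMatrixAlgEquiv'.injective
  rw [map_mul, map_one]
  exact Matrix.mul_self_eq_one_of_det_submatrix_fin_two_eq hι _ hminor

theorem sq_eq_one_of_map_two_eq_id {ι : Type*} [Fintype ι] [DecidableEq ι]
    (hι : 3 ≤ Fintype.card ι) (g : (ι → R) ≃ₗ[R] (ι → R))
    (hg : map 2 (g : Module.End R (ι → R)) = LinearMap.id) : g ^ 2 = 1 :=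
  LinearEquiv.toLinearMap_injective <| by
    rw [sq]
    exact mul_self_eq_one_of_map_two_eq_id hι _ hg

end exteriorPower

theorem LinearEquiv.prime_le_card_add_one_of_orderOf_eq {ι : Type*} [Fintype ι] [DecidableEq ι]
    {g : (ι → ℤ) ≃ₗ[ℤ] (ι → ℤ)} {p : ℕ} (hp : p.Prime) (hg : orderOf g = p) :
    p ≤ Fintype.card ι + 1 := by
  let toRatMatrix : ((ι → ℤ) ≃ₗ[ℤ] (ι → ℤ)) →* Matrix ι ι ℚ :=
    (Int.castRingHom ℚ).mapMatrix.toMonoidHom.comp <|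
      (LinearMap.toMatrixAlgEquiv' (R := ℤ) (n := ι)).toMonoidHom.comp
        automorphismGroup.toLinearMapMonoidHom
  have hinj : Function.Injective toRatMatrix :=
    (Matrix.map_injective Int.cast_injective).comp
      (LinearMap.toMatrixAlgEquiv'.injective.comp toLinearMap_injective)
  exact Matrix.prime_le_card_add_one_of_orderOf_eq hp ((orderOf_injective _ hinj g).trans hg)
theorem stmt_1_general (g : (Fin 4 → ℤ) ≃ₗ[ℤ] (Fin 4 → ℤ)) (d p : ℕ)
    (hd : orderOf g = d) (hp : p.Prime)
    (hordp : orderOf (extPowMap 2 (g : (Fin 4 → ℤ) →ₗ[ℤ] (Fin 4 → ℤ))) = p) :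
    p ∈ ({2, 3, 5} : Set ℕ) ∧ d ∈ ({2, 3, 4, 5, 6, 10} : Set ℕ) := by
  let Λ := (exteriorPower.mapMonoidHom ℤ (Fin 4 → ℤ) 2).comp
    LinearEquiv.automorphismGroup.toLinearMapMonoidHom
  have hΛ : orderOf (Λ g) = p := by rw [← hordp, exteriorPower.extPowMap_eq_map]; rfl
  have hpd : p ∣ d := hd ▸ hΛ ▸ orderOf_map_dvd Λ g
  have hd2p : d ∣ 2 * p := by
    have hgp : Λ (g ^ p) = 1 := by rw [map_pow, ← hΛ, pow_orderOf_eq_one]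
    rw [← hd, mul_comm]
    refine orderOf_dvd_of_pow_eq_one ?_
    rw [pow_mul]
    exact exteriorPower.sq_eq_one_of_map_two_eq_id (by simp) _ hgp
  have hdp : d = p ∨ d = 2 * p := by
    obtain ⟨k, rfl⟩ := hpd
    have hk : k ∣ 2 := Nat.dvd_of_mul_dvd_mul_left hp.pos (by rwa [mul_comm 2] at hd2p)
    rcases (Nat.dvd_prime Nat.prime_two).1 hk with rfl | rfl <;> simp [mul_comm]
  have hp5 : p ≤ 5 := by
    have hd0 : orderOf g ≠ 0 := by rw [hd]; rcases hdp with rfl | rfl <;> simp [hp.ne_zero]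
    simpa using LinearEquiv.prime_le_card_add_one_of_orderOf_eq hp
      (orderOf_pow_orderOf_div hd0 (hd ▸ hpd))
  have hp235 : p = 2 ∨ p = 3 ∨ p = 5 := by
    have := hp.two_le
    interval_cases p <;> simp_all +decide
  rcases hp235 with rfl | rfl | rfl <;> rcases hdp with rfl | rfl <;> simp

/-- If `g ∈ GL(4, ℤ)` has finite order `d` and the induced automorphism `⋀²g` of `⋀²ℤ⁴` has
prime order `p`, then `p ∈ {2, 3, 5}` and `d ∈ {2, 3, 4, 5, 6, 10}`. -/
theorem stmt_1 (g : (Fin 4 → ℤ) ≃ₗ[ℤ] (Fin 4 → ℤ)) (d p : ℕ)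
    (hd : orderOf g = d) (hd0 : 0 < d) (hp : p.Prime)
    (hordp : orderOf (extPowMap 2 (g : (Fin 4 → ℤ) →ₗ[ℤ] (Fin 4 → ℤ))) = p) :
    p ∈ ({2, 3, 5} : Set ℕ) ∧ d ∈ ({2, 3, 4, 5, 6, 10} : Set ℕ) :=
  stmt_1_general g d p hd hp hordp
end

section
/- Let L be a unimodular lattice, p a prime, and g an isometry of L with g^p = id. Let T = {x ∈ L : g(x) = x} and let S = T^⊥ be its orthogonal complement in L (the coinvariant lattice). Then S is p-elementary: for every x ∈ S ⊗ ℚ such that b(x, s) ∈ ℤ for all s ∈ S, one has p·x ∈ S; in particular the discriminant group S*/S is an elementary abelian p-group. -/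
/-!
For `x` in the dual of `S`, the functional `z ↦ b(x, z - g⁻¹ z)` is integral because
`z - g⁻¹ z ∈ S`, so by unimodularity it equals `b(w, ·)` for some `w ∈ L`; then `w ∈ S` and
`x - g x = w`, hence `x - gⁱ x ∈ S` for all `i`. On the other hand `∑_{i<p} gⁱ x = 0`: it pairs
with `z` as `x` pairs with `∑_{i<p} g⁻ⁱ z`, which is `g`-invariant, while `x ∈ S ⊗ ℚ` is
orthogonal to the invariant lattice.
Summing, `p x = ∑_{i<p} (x - gⁱ x) ∈ S`.
-/

open TensorProduct

noncomputable section

/-- The orthogonal complement of a submodule `T` with respect to a bilinear form `b`. -/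
def orthCompl {L : Type*} [AddCommGroup L] [Module ℤ L] (b : L →ₗ[ℤ] L →ₗ[ℤ] ℤ)
    (T : Submodule ℤ L) : Submodule ℤ L where
  carrier := {x | ∀ t ∈ T, b x t = 0}
  add_mem' := by
    intro x y hx hy t ht
    simp [map_add, hx t ht, hy t ht]
  zero_mem' := by
    intro t ht
    simp
  smul_mem' := by
    intro c x hx t ht
    simp [map_smul, hx t ht]

theorem LinearMap.IsAdjointPair.pow {R M : Type*} [CommSemiring R] [AddCommMonoid M] [Module R M]
    {B : LinearMap.BilinForm R M} {f g : Module.End R M} (h : IsAdjointPair B B f g) (n : ℕ) :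
    IsAdjointPair B B ⇑(f ^ n) ⇑(g ^ n) := by
  induction n with
  | zero => exact isAdjointPair_one
  | succ n ih =>
    rw [pow_succ, pow_succ']
    exact ih.mul h

theorem LinearMap.IsAdjointPair.baseChange {R A M : Type*} [CommRing R] [CommRing A]
    [Algebra R A] [AddCommGroup M] [Module R M] {B : LinearMap.BilinForm R M}
    {f g : Module.End R M} (h : IsAdjointPair B B f g) :
    IsAdjointPair (B.baseChange A) (B.baseChange A) (f.baseChange A) (g.baseChange A) := by
  intro x y
  induction x using TensorProduct.induction_on with
  | zero => simp
  | add x x' hx hx' => simp only [map_add, LinearMap.add_apply, hx, hx']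
  | tmul a m =>
    induction y using TensorProduct.induction_on with
    | zero => simp
    | add y y' hy hy' => simp only [map_add, hy, hy']
    | tmul a' m' => simp [h m m']

theorem Submodule.baseChange_apply_mem_map_mk {R A M : Type*} [CommSemiring R] [Semiring A]
    [Algebra R A] [AddCommMonoid M] [Module R M] {f : M →ₗ[R] M} {S : Submodule R M}
    (hS : ∀ s ∈ S, f s ∈ S) {v : A ⊗[R] M} (hv : v ∈ S.map (TensorProduct.mk R A M 1)) :
    f.baseChange A v ∈ S.map (TensorProduct.mk R A M 1) := by
  obtain ⟨s, hs, rfl⟩ := hv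
  exact ⟨f s, hS s hs, by simp⟩

theorem LinearEquiv.coe_symm_pow_eq_one {R M : Type*} [Semiring R] [AddCommMonoid M]
    [Module R M] {g : M ≃ₗ[R] M} {n : ℕ} (hg : g ^ n = 1) :
    (g.symm : Module.End R M) ^ n = 1 := by
  change LinearEquiv.automorphismGroup.toLinearMapMonoidHom g⁻¹ ^ n = 1
  rw [← map_pow, inv_pow, hg, inv_one, map_one]

namespace Module.End

variable {R M : Type*} [Semiring R] [AddCommGroup M] [Module R M]

theorem apply_sum_range_pow_apply {f : Module.End R M} {n : ℕ} (hf : f ^ n = 1) (z : M) :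
    f (∑ i ∈ Finset.range n, (f ^ i) z) = ∑ i ∈ Finset.range n, (f ^ i) z := by
  have h := mul_geom_sum f n
  rw [hf, sub_self] at h
  simpa [sub_eq_zero] using LinearMap.congr_fun h z

theorem nsmul_mem_of_sub_apply_mem {f : Module.End R M} {W : AddSubgroup M}
    (hW : ∀ v ∈ W, f v ∈ W) {x : M} (hx : x - f x ∈ W) {n : ℕ}
    (hn : ∑ i ∈ Finset.range n, (f ^ i) x = 0) : n • x ∈ W := by
  have hpow (i : ℕ) : x - (f ^ i) x ∈ W := by
    induction i with
    | zero => simp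
    | succ i ih =>
      have h : x - (f ^ (i + 1)) x = (x - f x) + f (x - (f ^ i) x) := by
        rw [pow_succ', Module.End.mul_apply, map_sub]
        abel
      exact h ▸ W.add_mem hx (hW _ ih)
  have h : n • x = ∑ i ∈ Finset.range n, (x - (f ^ i) x) := by
    rw [Finset.sum_sub_distrib, hn, sub_zero, Finset.sum_const, Finset.card_range]
  exact h ▸ W.sum_mem fun i _ => hpow i

end Module.End

theorem LinearMap.exists_intCast_apply_eq {L : Type*} [AddCommGroup L] [Module ℤ L]
    (φ : L →ₗ[ℤ] ℚ) (hφ : ∀ z, ∃ n : ℤ, φ z = n) : ∃ ψ : L →ₗ[ℤ] ℤ, ∀ z, (ψ z : ℚ) = φ z := by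
  choose ψ hψ using hφ
  refine ⟨{ toFun := ψ, map_add' := fun z z' => ?_, map_smul' := fun c z => ?_ },
    fun z => (hψ z).symm⟩
  · exact Int.cast_injective (α := ℚ) <| by rw [Int.cast_add, ← hψ, ← hψ, ← hψ, map_add]
  · exact Int.cast_injective (α := ℚ) <| by
      rw [RingHom.id_apply, smul_eq_mul, Int.cast_mul, ← hψ, ← hψ]
      simp

namespace LinearMap.BilinForm

variable {L : Type*} [AddCommGroup L] [Module ℤ L] {b : LinearMap.BilinForm ℤ L}

theorem baseChange_one_tmul_one_tmul (a c : L) :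
    b.baseChange ℚ ((1 : ℚ) ⊗ₜ[ℤ] a) ((1 : ℚ) ⊗ₜ[ℤ] c) = b a c := by
  simp

theorem eq_zero_of_baseChange_one_tmul_eq_zero (hb : Function.Injective b) {m : ℚ ⊗[ℤ] L}
    (hm : ∀ z : L, b.baseChange ℚ m ((1 : ℚ) ⊗ₜ[ℤ] z) = 0) : m = 0 := by
  obtain ⟨⟨w, n⟩, hnm⟩ := IsLocalizedModule.surj (nonZeroDivisors ℤ) (TensorProduct.mk ℤ ℚ L 1) m
  dsimp only [TensorProduct.mk_apply] at hnm
  have hw : w = 0 := (injective_iff_map_eq_zero b).mp hb w <| LinearMap.ext fun z => by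
    have h := congrArg (b.baseChange ℚ · ((1 : ℚ) ⊗ₜ[ℤ] z)) hnm
    simp only [Submonoid.smul_def, LinearMap.map_smul_of_tower, LinearMap.smul_apply, hm,
      smul_zero, baseChange_one_tmul_one_tmul] at h
    exact_mod_cast h.symm
  have hn : ((n : ℤ) : ℚ) ≠ 0 := Int.cast_ne_zero.mpr (nonZeroDivisors.coe_ne_zero n)
  rw [hw, TensorProduct.tmul_zero, Submonoid.smul_def, ← Int.cast_smul_eq_zsmul ℚ] at hnm
  exact (smul_eq_zero_iff_right hn).mp hnm

theorem exists_sub_baseChange_eq_one_tmul (hb : Function.Bijective b)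
    {f f' : Module.End ℤ L} (hff' : IsAdjointPair b b f f') {x : ℚ ⊗[ℤ] L}
    (hx : ∀ z, ∃ n : ℤ, b.baseChange ℚ x ((1 : ℚ) ⊗ₜ[ℤ] (z - f' z)) = n) :
    ∃ w : L, x - f.baseChange ℚ x = (1 : ℚ) ⊗ₜ[ℤ] w ∧ ∀ t, f' t = t → b w t = 0 := by
  let φ : L →ₗ[ℤ] ℚ :=
    ((b.baseChange ℚ x).restrictScalars ℤ) ∘ₗ TensorProduct.mk ℤ ℚ L 1 ∘ₗ (1 - f')
  obtain ⟨ψ, hψ⟩ := φ.exists_intCast_apply_eq hx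
  obtain ⟨w, rfl⟩ := hb.2 ψ
  have hwz (z : L) : (b w z : ℚ) = b.baseChange ℚ x ((1 : ℚ) ⊗ₜ[ℤ] (z - f' z)) := hψ z
  refine ⟨w, sub_eq_zero.mp <| eq_zero_of_baseChange_one_tmul_eq_zero hb.1 fun z => ?_,
    fun t ht => ?_⟩
  · have hadj := hff'.baseChange (A := ℚ) x ((1 : ℚ) ⊗ₜ[ℤ] z)
    rw [LinearMap.baseChange_tmul] at hadj
    rw [map_sub, map_sub, LinearMap.sub_apply, LinearMap.sub_apply, hadj,
      baseChange_one_tmul_one_tmul, hwz, TensorProduct.tmul_sub, map_sub, sub_self]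
  · have h := hwz t
    rw [ht, sub_self, TensorProduct.tmul_zero, map_zero] at h
    exact_mod_cast h

theorem sum_range_pow_baseChange_apply_eq_zero (hb : Function.Injective b)
    {f f' : Module.End ℤ L} (hff' : IsAdjointPair b b f f') {n : ℕ} (hf' : f' ^ n = 1)
    {x : ℚ ⊗[ℤ] L} (hx : ∀ t, f' t = t → b.baseChange ℚ x ((1 : ℚ) ⊗ₜ[ℤ] t) = 0) :
    ∑ i ∈ Finset.range n, (f.baseChange ℚ ^ i) x = 0 := by
  refine eq_zero_of_baseChange_one_tmul_eq_zero hb fun z => ?_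
  have hadj (i : ℕ) : b.baseChange ℚ ((f.baseChange ℚ ^ i) x) ((1 : ℚ) ⊗ₜ[ℤ] z)
      = b.baseChange ℚ x ((1 : ℚ) ⊗ₜ[ℤ] (f' ^ i) z) := by
    rw [← LinearMap.baseChange_pow, (hff'.pow i).baseChange, LinearMap.baseChange_tmul]
  rw [map_sum, LinearMap.sum_apply, Finset.sum_congr rfl fun i _ => hadj i, ← map_sum,
    ← TensorProduct.tmul_sum]
  exact hx _ (Module.End.apply_sum_range_pow_apply hf' z)

theorem baseChange_apply_one_tmul_eq_zero_of_mem_span {T : Submodule ℤ L} {x : ℚ ⊗[ℤ] L}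
    (hx : x ∈ Submodule.span ℚ ((fun s : L => (1 : ℚ) ⊗ₜ[ℤ] s) '' (orthCompl b T : Set L)))
    {t : L} (ht : t ∈ T) : b.baseChange ℚ x ((1 : ℚ) ⊗ₜ[ℤ] t) = 0 := by
  suffices h : Submodule.span ℚ ((fun s : L => (1 : ℚ) ⊗ₜ[ℤ] s) '' (orthCompl b T : Set L))
      ≤ LinearMap.ker ((b.baseChange ℚ).flip ((1 : ℚ) ⊗ₜ[ℤ] t)) from h hx
  rw [Submodule.span_le]
  rintro _ ⟨s, hs, rfl⟩
  simp [hs t ht]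

end LinearMap.BilinForm

section Coinvariant

variable {L : Type*} [AddCommGroup L] [Module ℤ L] {b : LinearMap.BilinForm ℤ L}
  {g : L ≃ₗ[ℤ] L}

theorem LinearEquiv.mem_ker_coe_sub_id_iff {t : L} :
    t ∈ LinearMap.ker ((g : L →ₗ[ℤ] L) - LinearMap.id) ↔ g t = t := by
  simp [sub_eq_zero]

theorem LinearEquiv.mem_ker_coe_sub_id_iff_symm {t : L} :
    t ∈ LinearMap.ker ((g : L →ₗ[ℤ] L) - LinearMap.id) ↔ g.symm t = t := by
  rw [mem_ker_coe_sub_id_iff, g.symm_apply_eq, eq_comm]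

theorem apply_mem_orthCompl_ker_sub_id (hg : b.IsOrthogonal g) {s : L}
    (hs : s ∈ orthCompl b (LinearMap.ker ((g : L →ₗ[ℤ] L) - LinearMap.id))) :
    g s ∈ orthCompl b (LinearMap.ker ((g : L →ₗ[ℤ] L) - LinearMap.id)) := by
  intro t ht
  rw [← LinearEquiv.mem_ker_coe_sub_id_iff.mp ht, hg]
  exact hs t ht

theorem sub_symm_apply_mem_orthCompl_ker_sub_id (hg : b.IsOrthogonal g) (z : L) :
    z - g.symm z ∈ orthCompl b (LinearMap.ker ((g : L →ₗ[ℤ] L) - LinearMap.id)) := by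
  intro t ht
  have h := hg (g.symm z) t
  rw [g.apply_symm_apply, LinearEquiv.mem_ker_coe_sub_id_iff.mp ht] at h
  rw [map_sub, LinearMap.sub_apply, h, sub_self]

end Coinvariant

theorem stmt_7_general {L : Type*} [AddCommGroup L] [Module ℤ L]
    (b : LinearMap.BilinForm ℤ L)
    (huni : Function.Bijective fun x : L => b x)
    (p : ℕ)
    (g : L ≃ₗ[ℤ] L) (hgb : ∀ x y, b (g x) (g y) = b x y) (hgp : g ^ p = 1)
    (S : Submodule ℤ L)
    (hS : S = orthCompl b (LinearMap.ker ((g : L →ₗ[ℤ] L) - LinearMap.id))) :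
    ∀ x : ℚ ⊗[ℤ] L,
      x ∈ Submodule.span ℚ ((fun s : L => (1 : ℚ) ⊗ₜ[ℤ] s) '' (S : Set L)) →
      (∀ s ∈ S, ∃ n : ℤ, LinearMap.BilinForm.baseChange ℚ b x ((1 : ℚ) ⊗ₜ[ℤ] s) = (n : ℚ)) →
      ∃ s ∈ S, (p : ℚ) • x = (1 : ℚ) ⊗ₜ[ℤ] s := by
  intro x hx hint
  subst hS
  have hadj : LinearMap.IsAdjointPair b b (g : Module.End ℤ L) (g.symm : Module.End ℤ L) :=
    (LinearEquiv.isAdjointPair_symm_iff (f := g.toEquiv)).mpr hgb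
  obtain ⟨w, hw, hw_orth⟩ := LinearMap.BilinForm.exists_sub_baseChange_eq_one_tmul huni hadj
    fun z => hint _ (sub_symm_apply_mem_orthCompl_ker_sub_id hgb z)
  have hnorm := LinearMap.BilinForm.sum_range_pow_baseChange_apply_eq_zero huni.1 hadj
    (LinearEquiv.coe_symm_pow_eq_one hgp) fun t ht =>
      LinearMap.BilinForm.baseChange_apply_one_tmul_eq_zero_of_mem_span hx
        (LinearEquiv.mem_ker_coe_sub_id_iff_symm.mpr ht)
  have hwS : w ∈ orthCompl b (LinearMap.ker ((g : L →ₗ[ℤ] L) - LinearMap.id)) :=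
    fun t ht => hw_orth t (LinearEquiv.mem_ker_coe_sub_id_iff_symm.mp ht)
  obtain ⟨s, hs, hsx⟩ := Module.End.nsmul_mem_of_sub_apply_mem
    (W := ((orthCompl b _).map (TensorProduct.mk ℤ ℚ L 1)).toAddSubgroup)
    (fun v => Submodule.baseChange_apply_mem_map_mk fun s => apply_mem_orthCompl_ker_sub_id hgb)
    ⟨w, hwS, hw.symm⟩ hnorm
  exact ⟨s, hs, by rw [Nat.cast_smul_eq_nsmul]; exact hsx.symm⟩

/-- Let `L` be a unimodular lattice, `p` a prime and `g` an isometry of `L` with `g ^ p = id`.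
Let `T` be the invariant lattice and `S = T^⊥` the coinvariant lattice. Then `S` is
`p`-elementary: every element `x` of `S ⊗ ℚ` with `b(x, s) ∈ ℤ` for all `s ∈ S` satisfies
`p • x ∈ S`. -/
theorem stmt_7 {L : Type*} [AddCommGroup L] [Module ℤ L] [Module.Free ℤ L] [Module.Finite ℤ L]
    (b : LinearMap.BilinForm ℤ L) (hsymm : ∀ x y, b x y = b y x)
    (huni : Function.Bijective fun x : L => b x)
    (p : ℕ) (hp : p.Prime)
    (g : L ≃ₗ[ℤ] L) (hgb : ∀ x y, b (g x) (g y) = b x y) (hgp : g ^ p = 1)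
    (S : Submodule ℤ L)
    (hS : S = orthCompl b (LinearMap.ker ((g : L →ₗ[ℤ] L) - LinearMap.id))) :
    ∀ x : ℚ ⊗[ℤ] L,
      x ∈ Submodule.span ℚ ((fun s : L => (1 : ℚ) ⊗ₜ[ℤ] s) '' (S : Set L)) →
      (∀ s ∈ S, ∃ n : ℤ, LinearMap.BilinForm.baseChange ℚ b x ((1 : ℚ) ⊗ₜ[ℤ] s) = (n : ℚ)) →
      ∃ s ∈ S, (p : ℚ) • x = (1 : ℚ) ⊗ₜ[ℤ] s :=
  stmt_7_general b huni p g hgb hgp S hS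
end
end

section
/- Let M, M' ∈ M_2(ℤ) be symmetric even matrices that are indefinite (det M < 0 and det M' < 0), with |det M| ≤ 16, and suppose that M and M' lie in the same genus, i.e. for every prime q there exists P_q ∈ GL_2(ℤ_q) (ℤ_q the q-adic integers) with P_qᵀ M P_q = M'. Then M and M' are ℤ-congruent: there exists P ∈ GL_2(ℤ) with PᵀMP = M'. Equivalently, an indefinite even lattice of rank 2 with more than one class in its genus has discriminant d ≥ 17. -/
/-!
Write the lattice as `evenGram a b c`, the Gram matrix of `2 (a x² + b x y + c y²)`, of
discriminant `D = b² - 4ac = |det|`. Over ℤ every such form with `0 < D ≤ 16` is congruent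
to one of fifteen canonical forms. If `D = k²` the form is isotropic, a primitive isotropic vector
extends to a basis, and the form becomes `2 (k x y + c y²)` with `0 ≤ c < k`. Otherwise Gauss
reduction gives `|b| ≤ |a| ≤ |c|`, so `4a² ≤ D < 16` forces `a = ±1`, after which the form is
fixed by `D` and the sign of `a`. On the local side, `q`-adic congruence preserves the
determinant up to a unit square for every `q`, hence preserves `|det|`, and it preserves the set
of values of `xᵀ M x` modulo `q ^ k`. The values modulo `8` and modulo `3` already tell apart
any two canonical forms with the same discriminant.
-/

open Matrix

namespace Matrix

variable {ι R : Type*} [Fintype ι] [DecidableEq ι] [CommRing R]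

def IsCongruent (A B : Matrix ι ι R) : Prop :=
  ∃ P : Matrix ι ι R, IsUnit P.det ∧ Pᵀ * A * P = B

namespace IsCongruent

@[refl]
theorem refl (A : Matrix ι ι R) : IsCongruent A A :=
  ⟨1, by simp, by simp⟩

theorem trans {A B C : Matrix ι ι R} : IsCongruent A B → IsCongruent B C → IsCongruent A C
  | ⟨P, hP, hPB⟩, ⟨Q, hQ, hQC⟩ =>
    ⟨P * Q, by rw [det_mul]; exact hP.mul hQ,
      by rw [← hQC, ← hPB, transpose_mul]; noncomm_ring⟩

theorem symm {A B : Matrix ι ι R} : IsCongruent A B → IsCongruent B A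
  | ⟨P, hP, hPB⟩ => by
    refine ⟨P⁻¹, isUnit_nonsing_inv_det P hP, ?_⟩
    rw [← hPB, transpose_nonsing_inv]
    calc Pᵀ⁻¹ * (Pᵀ * A * P) * P⁻¹ = (Pᵀ⁻¹ * Pᵀ) * A * (P * P⁻¹) := by noncomm_ring
      _ = A := by
        rw [nonsing_inv_mul _ (by rwa [det_transpose]), mul_nonsing_inv _ hP, one_mul,
          mul_one]

theorem map {S : Type*} [CommRing S] (f : R →+* S) {A B : Matrix ι ι R} :
    IsCongruent A B → IsCongruent (A.map f) (B.map f)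
  | ⟨P, hP, hPB⟩ =>
    ⟨P.map f, by rw [← RingHom.mapMatrix_apply, ← RingHom.map_det]; exact hP.map f,
      by rw [← transpose_map, ← Matrix.map_mul, ← Matrix.map_mul, hPB]⟩

theorem intCast_map {A B : Matrix ι ι ℤ} (h : IsCongruent A B) :
    IsCongruent (A.map (Int.cast : ℤ → R)) (B.map Int.cast) :=
  h.map (Int.castRingHom R)

theorem exists_det_eq {A B : Matrix ι ι R} :
    IsCongruent A B → ∃ u : Rˣ, B.det = u ^ 2 * A.det
  | ⟨P, hP, hPB⟩ =>
    ⟨hP.unit, by rw [← hPB, det_mul, det_mul, det_transpose, IsUnit.unit_spec]; ring⟩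

theorem det_dvd {A B : Matrix ι ι R} (h : IsCongruent A B) : A.det ∣ B.det := by
  obtain ⟨u, hu⟩ := h.exists_det_eq
  exact ⟨u ^ 2, by rw [hu, mul_comm]⟩

theorem det_eq_of_int {A B : Matrix ι ι ℤ} (h : IsCongruent A B) : B.det = A.det := by
  obtain ⟨u, hu⟩ := h.exists_det_eq
  rw [hu, ← Units.val_pow_eq_pow_val, Int.units_sq, Units.val_one, one_mul]

end IsCongruent

theorem _root_.Int.dvd_of_forall_padicInt_dvd {a b : ℤ}
    (h : ∀ (p : ℕ) [Fact p.Prime], (a : ℤ_[p]) ∣ (b : ℤ_[p])) : a ∣ b := by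
  rw [← Int.natAbs_dvd_natAbs, Nat.dvd_iff_prime_pow_dvd_dvd]
  intro p k hp hpa
  have := Fact.mk hp
  have hpa' : (p : ℤ_[p]) ^ k ∣ (a : ℤ_[p]) :=
    (PadicInt.pow_p_dvd_int_iff k a).mpr (by exact_mod_cast Int.natCast_dvd.mpr hpa)
  exact Int.natCast_dvd.mp
    (by exact_mod_cast (PadicInt.pow_p_dvd_int_iff k b).mp (hpa'.trans (h p)))

theorem natAbs_det_eq_of_forall_padicInt_isCongruent {A B : Matrix ι ι ℤ}
    (h : ∀ (p : ℕ) [Fact p.Prime],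
      IsCongruent (A.map (Int.cast : ℤ → ℤ_[p])) (B.map Int.cast)) :
    A.det.natAbs = B.det.natAbs := by
  refine Int.natAbs_eq_of_dvd_dvd (Int.dvd_of_forall_padicInt_dvd fun p _ => ?_)
    (Int.dvd_of_forall_padicInt_dvd fun p _ => ?_)
  · simpa only [Int.cast_det] using (h p).det_dvd
  · simpa only [Int.cast_det] using (h p).symm.det_dvd

def valueSet (n : ℕ) [NeZero n] (A : Matrix ι ι ℤ) : Finset (ZMod n) :=
  Finset.univ.image fun x : ι → ZMod n => x ⬝ᵥ (A.map (↑) *ᵥ x)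

theorem IsCongruent.valueSet_subset {n : ℕ} [NeZero n] {A B : Matrix ι ι ℤ}
    (h : IsCongruent (A.map (Int.cast : ℤ → ZMod n)) (B.map Int.cast)) :
    valueSet n B ⊆ valueSet n A := by
  obtain ⟨P, -, hP⟩ := h
  intro v hv
  simp only [valueSet, Finset.mem_image, Finset.mem_univ, true_and] at hv ⊢
  obtain ⟨x, rfl⟩ := hv
  refine ⟨P *ᵥ x, ?_⟩
  rw [← hP, ← mulVec_mulVec, ← mulVec_mulVec, dotProduct_mulVec x, vecMul_transpose]

theorem valueSet_eq_of_padicInt_isCongruent (q k : ℕ) [Fact q.Prime] {A B : Matrix ι ι ℤ}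
    (h : IsCongruent (A.map (Int.cast : ℤ → ℤ_[q])) (B.map Int.cast)) :
    valueSet (q ^ k) A = valueSet (q ^ k) B := by
  have reduce : ∀ {A B : Matrix ι ι ℤ},
      IsCongruent (A.map (Int.cast : ℤ → ℤ_[q])) (B.map Int.cast) →
        IsCongruent (A.map (Int.cast : ℤ → ZMod (q ^ k))) (B.map Int.cast) := fun h => by
    simpa only [map_map, Function.comp_def, map_intCast] using h.map (PadicInt.toZModPow k)
  exact subset_antisymm (reduce h.symm).valueSet_subset (reduce h).valueSet_subset

end Matrix

def evenGram (a b c : ℤ) : Matrix (Fin 2) (Fin 2) ℤ :=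
  !![2 * a, b; b, 2 * c]

theorem det_evenGram (a b c : ℤ) : (evenGram a b c).det = 4 * a * c - b ^ 2 := by
  rw [evenGram, det_fin_two_of]; ring

theorem exists_eq_evenGram {M : Matrix (Fin 2) (Fin 2) ℤ} (hs : M.IsSymm)
    (he : ∀ i, Even (M i i)) : ∃ a b c, M = evenGram a b c := by
  obtain ⟨a, ha⟩ := he 0
  obtain ⟨c, hc⟩ := he 1
  refine ⟨a, M 0 1, c, ?_⟩
  have h10 : M 1 0 = M 0 1 := hs.apply 0 1
  ext i j
  fin_cases i <;> fin_cases j <;> simp [evenGram, ha, hc, h10, two_mul]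

theorem evenGram_isCongruent (a b c p q r s : ℤ) (h : IsUnit (p * s - q * r)) :
    IsCongruent (evenGram a b c)
      (evenGram (a * p ^ 2 + b * p * r + c * r ^ 2)
        (2 * a * p * q + b * (p * s + q * r) + 2 * c * r * s)
        (a * q ^ 2 + b * q * s + c * s ^ 2)) := by
  refine ⟨!![p, q; r, s], by rwa [det_fin_two_of], ?_⟩
  ext i j
  fin_cases i <;> fin_cases j <;> simp [evenGram, Matrix.mul_apply, Fin.sum_univ_two] <;> ring

theorem evenGram_isCongruent_translate (a b c t : ℤ) :
    IsCongruent (evenGram a b c) (evenGram a (b + 2 * a * t) (a * t ^ 2 + b * t + c)) := by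
  convert evenGram_isCongruent a b c 1 t 0 1 (by simp) using 2 <;> ring

theorem evenGram_isCongruent_swap (a b c : ℤ) :
    IsCongruent (evenGram a b c) (evenGram c b a) := by
  convert evenGram_isCongruent a b c 0 1 1 0 (by simp) using 2 <;> ring

theorem evenGram_isCongruent_neg (a b c : ℤ) :
    IsCongruent (evenGram a b c) (evenGram a (-b) c) := by
  convert evenGram_isCongruent a b c 1 0 0 (-1) (by simp) using 2 <;> ring

theorem exists_abs_add_two_mul_le (b : ℤ) {a : ℤ} (ha : a ≠ 0) :
    ∃ t, |b + 2 * a * t| ≤ |a| := by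
  have h2a : 2 * a ≠ 0 := mul_ne_zero two_ne_zero ha
  have hlt := Int.emod_lt (b + |a|) h2a
  have hnn := Int.emod_nonneg (b + |a|) h2a
  have hdef := Int.emod_def (b + |a|) (2 * a)
  have habs : ((2 * a).natAbs : ℤ) = 2 * |a| := by rw [Int.natCast_natAbs, abs_mul, abs_two]
  refine ⟨-((b + |a|) / (2 * a)), abs_le.mpr ⟨?_, ?_⟩⟩ <;> linarith

theorem exists_isCongruent_reduced (a b c : ℤ) :
    ∃ a' b' c', IsCongruent (evenGram a b c) (evenGram a' b' c') ∧
      (a' = 0 ∨ |b'| ≤ |a'| ∧ |a'| ≤ |c'|) := by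
  induction h : a.natAbs using Nat.strong_induction_on generalizing a b c with
  | _ n ih =>
  rcases eq_or_ne a 0 with rfl | ha
  · exact ⟨0, b, c, .refl _, .inl rfl⟩
  obtain ⟨t, ht⟩ := exists_abs_add_two_mul_le b ha
  have htr := evenGram_isCongruent_translate a b c t
  by_cases hc : |a| ≤ |a * t ^ 2 + b * t + c|
  · exact ⟨_, _, _, htr, .inr ⟨ht, hc⟩⟩
  have hlt : (a * t ^ 2 + b * t + c).natAbs < n := by
    rw [Int.abs_eq_natAbs, Int.abs_eq_natAbs] at hc; omega
  obtain ⟨a', b', c', h', hred⟩ := ih _ hlt _ (b + 2 * a * t) a rfl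
  exact ⟨a', b', c', (htr.trans (evenGram_isCongruent_swap _ _ _)).trans h', hred⟩

theorem four_mul_sq_le_disc_of_reduced {a b c : ℤ} (hb : |b| ≤ |a|) (hc : |a| ≤ |c|)
    (hD : 0 < b ^ 2 - 4 * a * c) : 4 * a ^ 2 ≤ b ^ 2 - 4 * a * c := by
  have hba : b ^ 2 ≤ a ^ 2 := sq_le_sq.mpr hb
  have hac : a ^ 2 ≤ |a * c| := by
    rw [abs_mul, ← sq_abs, sq]; exact mul_le_mul_of_nonneg_left hc (abs_nonneg a)
  rcases abs_cases (a * c) with ⟨h, -⟩ | ⟨h, -⟩ <;> nlinarith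

theorem exists_isCongruent_evenGram_zero_of_isotropic {a b c p r : ℤ} (hpr : IsCoprime p r)
    (h : a * p ^ 2 + b * p * r + c * r ^ 2 = 0) :
    ∃ b' c', IsCongruent (evenGram a b c) (evenGram 0 b' c') := by
  obtain ⟨u, v, huv⟩ := hpr
  have hdet : p * u - (-v) * r = 1 := by linear_combination huv
  exact ⟨_, _, h ▸ evenGram_isCongruent a b c p (-v) r u (hdet ▸ isUnit_one)⟩

theorem exists_isCongruent_evenGram_zero_of_disc_eq_sq {a b c k : ℤ}
    (h : b ^ 2 - 4 * a * c = k ^ 2) :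
    ∃ b' c', IsCongruent (evenGram a b c) (evenGram 0 b' c') := by
  rcases eq_or_ne a 0 with rfl | ha
  · exact exists_isCongruent_evenGram_zero_of_isotropic (p := 1) (r := 0)
      isCoprime_one_left (by ring)
  -- `(k - b, 2a)` is isotropic; dividing by its content makes it primitive
  obtain ⟨g, p, r, hg, hpr, hp, hr⟩ :=
    Int.exists_gcd_one' (Int.gcd_pos_of_ne_zero_right (k - b) (mul_ne_zero two_ne_zero ha))
  refine exists_isCongruent_evenGram_zero_of_isotropic (Int.isCoprime_iff_gcd_eq_one.mpr hpr) ?_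
  have hg2 : (g : ℤ) ^ 2 * (a * p ^ 2 + b * p * r + c * r ^ 2) = 0 := by
    linear_combination (-a) * h - (a * (p * g + k - b) + b * r * g) * hp
      - (b * (k - b) + c * (r * g + 2 * a)) * hr
  exact (mul_eq_zero.mp hg2).resolve_left (by positivity)

theorem evenGram_zero_isCongruent_emod {b c k : ℤ} (hb : b ^ 2 = k ^ 2) :
    IsCongruent (evenGram 0 b c) (evenGram 0 k (c % k)) := by
  have hk : IsCongruent (evenGram 0 k c) (evenGram 0 k (c % k)) := by
    convert evenGram_isCongruent_translate 0 k c (-(c / k)) using 2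
    · ring
    · rw [Int.emod_def]; ring
  rcases sq_eq_sq_iff_eq_or_eq_neg.mp hb with rfl | rfl
  · exact hk
  · exact (evenGram_isCongruent_neg 0 (-k) c).trans (by rwa [neg_neg])

theorem exists_isCongruent_evenGram_leading_unit {a b c : ℤ} (hD : 0 < b ^ 2 - 4 * a * c)
    (hD16 : b ^ 2 - 4 * a * c < 16) (hsq : ∀ k : ℤ, k ^ 2 ≠ b ^ 2 - 4 * a * c) :
    ∃ u e c', (u = 1 ∨ u = -1) ∧ (e = 0 ∨ e = 1) ∧
      IsCongruent (evenGram a b c) (evenGram u e c') := by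
  obtain ⟨a', b', c', h, hred⟩ := exists_isCongruent_reduced a b c
  have hdisc := h.det_eq_of_int
  simp only [det_evenGram] at hdisc
  rcases hred with rfl | ⟨hb, hc⟩
  · exact absurd (by linarith) (hsq b')
  have h4 := four_mul_sq_le_disc_of_reduced hb hc (by linarith)
  have hu : a' = 1 ∨ a' = -1 := by
    have : a' ≠ 0 := by rintro rfl; simp at hb; subst hb; linarith
    have : -2 < a' ∧ a' < 2 := ⟨by nlinarith, by nlinarith⟩
    omega
  -- as `a' ^ 2 = 1`, translating by `-a' * (b' / 2)` replaces `b'` by `b' % 2`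
  have htr := evenGram_isCongruent_translate a' b' c' (-a' * (b' / 2))
  have hb2 : b' + 2 * a' * (-a' * (b' / 2)) = b' % 2 := by
    rcases hu with rfl | rfl <;> rw [Int.emod_def] <;> ring
  exact ⟨a', b' % 2, _, hu, Int.emod_two_eq b', h.trans (hb2 ▸ htr)⟩

def canonicalGrams : List (Matrix (Fin 2) (Fin 2) ℤ) :=
  [evenGram 0 1 0, evenGram 0 2 0, evenGram 0 2 1, evenGram 1 1 (-1), evenGram 1 0 (-2),
    evenGram 0 3 0, evenGram 0 3 1, evenGram 0 3 2, evenGram 1 0 (-3), evenGram (-1) 0 3,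
    evenGram 1 1 (-3), evenGram 0 4 0, evenGram 0 4 1, evenGram 0 4 2, evenGram 0 4 3]

set_option maxRecDepth 100000 in
theorem eq_of_mem_canonicalGrams :
    ∀ A ∈ canonicalGrams, ∀ B ∈ canonicalGrams, A.det = B.det →
      valueSet (2 ^ 3) A = valueSet (2 ^ 3) B → valueSet (3 ^ 1) A = valueSet (3 ^ 1) B →
        A = B := by
  decide

theorem exists_mem_canonicalGrams_of_disc_eq_sq {a b c k : ℤ} (hk : 0 < k) (hk4 : k ≤ 4)
    (h : b ^ 2 - 4 * a * c = k ^ 2) :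
    ∃ C ∈ canonicalGrams, IsCongruent (evenGram a b c) C := by
  obtain ⟨b', c', h'⟩ := exists_isCongruent_evenGram_zero_of_disc_eq_sq h
  have hb' : b' ^ 2 = k ^ 2 := by
    have := h'.det_eq_of_int
    simp only [det_evenGram] at this
    linarith
  have hC := h'.trans (evenGram_zero_isCongruent_emod (c := c') hb')
  have := Int.emod_nonneg c' hk.ne'
  have := Int.emod_lt_of_pos c' hk
  generalize c' % k = e at *
  interval_cases k <;> interval_cases e <;> exact ⟨_, by decide, hC⟩

theorem evenGram_isCongruent_disc_eight :
    IsCongruent (evenGram (-1) 0 2) (evenGram 1 0 (-2)) :=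
  ⟨!![1, 2; 1, 1], by rw [det_fin_two_of]; decide, by decide⟩

theorem evenGram_isCongruent_disc_thirteen :
    IsCongruent (evenGram (-1) 1 3) (evenGram 1 1 (-3)) :=
  ⟨!![2, -3; 1, -1], by rw [det_fin_two_of]; decide, by decide⟩

theorem exists_mem_canonicalGrams_of_not_sq {a b c : ℤ} (hD : 0 < b ^ 2 - 4 * a * c)
    (hD16 : b ^ 2 - 4 * a * c < 16) (hsq : ∀ k : ℤ, k ^ 2 ≠ b ^ 2 - 4 * a * c) :
    ∃ C ∈ canonicalGrams, IsCongruent (evenGram a b c) C := by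
  obtain ⟨u, e, c', hu, he, h⟩ := exists_isCongruent_evenGram_leading_unit hD hD16 hsq
  have hdisc : e ^ 2 - 4 * u * c' = b ^ 2 - 4 * a * c := by
    have := h.det_eq_of_int
    simp only [det_evenGram] at this
    linarith
  generalize b ^ 2 - 4 * a * c = D at *
  rcases hu with rfl | rfl <;> rcases he with rfl | rfl <;> norm_num at hdisc
  · obtain rfl | rfl | rfl : c' = -1 ∨ c' = -2 ∨ c' = -3 := by omega
    · exact absurd (by linarith) (hsq 2)
    all_goals exact ⟨_, by decide, h⟩
  · obtain rfl | rfl | rfl | rfl : c' = 0 ∨ c' = -1 ∨ c' = -2 ∨ c' = -3 := by omega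
    · exact absurd (by linarith) (hsq 1)
    · exact ⟨_, by decide, h⟩
    · exact absurd (by linarith) (hsq 3)
    · exact ⟨_, by decide, h⟩
  · obtain rfl | rfl | rfl : c' = 1 ∨ c' = 2 ∨ c' = 3 := by omega
    · exact absurd (by linarith) (hsq 2)
    · exact ⟨_, by decide, h.trans evenGram_isCongruent_disc_eight⟩
    · exact ⟨_, by decide, h⟩
  · obtain rfl | rfl | rfl | rfl : c' = 0 ∨ c' = 1 ∨ c' = 2 ∨ c' = 3 := by omega
    · exact absurd (by linarith) (hsq 1)
    · exact ⟨_, by decide, h.trans (evenGram_isCongruent_swap _ _ _)⟩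
    · exact absurd (by linarith) (hsq 3)
    · exact ⟨_, by decide, h.trans evenGram_isCongruent_disc_thirteen⟩

theorem exists_mem_canonicalGrams {a b c : ℤ} (hD : 0 < b ^ 2 - 4 * a * c)
    (hD16 : b ^ 2 - 4 * a * c ≤ 16) :
    ∃ C ∈ canonicalGrams, IsCongruent (evenGram a b c) C := by
  by_cases hsq : ∃ k : ℤ, k ^ 2 = b ^ 2 - 4 * a * c
  · obtain ⟨k, hk⟩ := hsq
    have hk0 : k ≠ 0 := by rintro rfl; linarith
    exact exists_mem_canonicalGrams_of_disc_eq_sq (abs_pos.mpr hk0)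
      (by nlinarith [sq_abs k, abs_nonneg k]) (by rw [sq_abs, hk])
  · push Not at hsq
    exact exists_mem_canonicalGrams_of_not_sq hD
      (lt_of_le_of_ne hD16 fun h => hsq 4 (by rw [h]; norm_num)) hsq

/-- An indefinite even lattice of rank 2 and discriminant at most 16 is alone in its genus:
if `M` and `M'` are congruent over the `q`-adic integers for every prime `q`, then they are
congruent over `ℤ`. -/
theorem stmt_12 (M M' : Matrix (Fin 2) (Fin 2) ℤ)
    (hs : M.IsSymm) (hs' : M'.IsSymm)
    (he : ∀ i, Even (M i i)) (he' : ∀ i, Even (M' i i))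
    (hd : M.det < 0) (hd' : M'.det < 0) (hbound : |M.det| ≤ 16)
    (hgenus : ∀ (q : ℕ) [Fact q.Prime], ∃ P : Matrix (Fin 2) (Fin 2) ℤ_[q],
      IsUnit P.det ∧
        Pᵀ * M.map (Int.cast : ℤ → ℤ_[q]) * P = M'.map (Int.cast : ℤ → ℤ_[q])) :
    ∃ P : Matrix (Fin 2) (Fin 2) ℤ, IsUnit P.det ∧ Pᵀ * M * P = M' := by
  have hdet : M.det = M'.det := by
    rcases Int.natAbs_eq_natAbs_iff.mp (natAbs_det_eq_of_forall_padicInt_isCongruent hgenus)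
      with h | h <;> linarith
  obtain ⟨a, b, c, rfl⟩ := exists_eq_evenGram hs he
  obtain ⟨a', b', c', rfl⟩ := exists_eq_evenGram hs' he'
  have hdisc := hdet
  have hD := (abs_le.mp hbound).1
  simp only [det_evenGram] at hd hD hdisc
  obtain ⟨C, hC, hMC⟩ := exists_mem_canonicalGrams (a := a) (b := b) (c := c)
    (by linarith) (by linarith)
  obtain ⟨C', hC', hMC'⟩ := exists_mem_canonicalGrams (a := a') (b := b') (c := c')
    (by linarith) (by linarith)
  have hCC : ∀ (q : ℕ) [Fact q.Prime],
      IsCongruent (C.map (Int.cast : ℤ → ℤ_[q])) (C'.map Int.cast) :=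
    fun q _ => (hMC.intCast_map.symm.trans (hgenus q)).trans hMC'.intCast_map
  obtain rfl : C = C' := eq_of_mem_canonicalGrams C hC C' hC'
    (hMC.det_eq_of_int.trans (hdet.trans hMC'.det_eq_of_int.symm))
    (valueSet_eq_of_padicInt_isCongruent 2 3 (hCC 2))
    (valueSet_eq_of_padicInt_isCongruent 3 1 (hCC 3))
  exact hMC.trans hMC'.symm
end

section
/- Let p be an odd prime, let M ∈ M_{p−1}(ℤ) be a symmetric matrix with det M ≠ 0, and let g ∈ GL_{p−1}(ℤ) with g ≠ id, g^p = id, and gᵀMg = M (i.e. the rank-(p−1) lattice with Gram matrix M carries a non-trivial isometry of order p). Then |det M| / p^{p−2} is the square of a rational number. -/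
/-!
Over `ℚ`, with `A` the image of `g` and `B = A ^ (p - 1) = A⁻¹`, the matrix `S = M * (B - A)`
is skew-symmetric because `A` is an isometry of the symmetric form `M`, so `det S` is a square
(the square of a Pfaffian). On the other hand `B - A = B * (1 - A ^ 2)`, where `det B = 1` since
`p` is odd, and `A ^ 2 ≠ 1` has order `p` in dimension `p - 1`, so its characteristic polynomial
is the irreducible cyclotomic polynomial `Φ_p` and `det (1 - A ^ 2) = Φ_p(1) = p`. Hence
`det M * p` is a square, and dividing it by the square `p ^ (p - 1)` gives the claim.
-/

open Matrix Polynomial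

def Equiv.finTwoSumOfNe {n : Type*} [DecidableEq n] {i j : n} (h : i ≠ j) :
    Fin 2 ⊕ {x // x ≠ i ∧ x ≠ j} ≃ n where
  toFun := Sum.elim ![i, j] Subtype.val
  invFun x := if hi : x = i then .inl 0 else if hj : x = j then .inl 1 else .inr ⟨x, hi, hj⟩
  left_inv := by
    rintro (k | ⟨x, hi, hj⟩)
    · fin_cases k <;> simp [h.symm]
    · simp [hi, hj]
  right_inv x := by
    by_cases hi : x = i <;> by_cases hj : x = j <;> simp [*, h.symm]

namespace Matrix

section Skew

variable {R K : Type*} [CommRing R] [Field K]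

theorem transpose_invOf_eq_neg {m : Type*} [Fintype m] [DecidableEq m] {A : Matrix m m R}
    [Invertible A] (hA : Aᵀ = -A) : (⅟A)ᵀ = -⅟A := by
  have : (-(⅟A)ᵀ) * A = 1 := by
    rw [neg_mul, ← mul_neg, ← hA, ← transpose_mul, mul_invOf_self, transpose_one]
  exact neg_eq_iff_eq_neg.mp (invOf_eq_left_inv this).symm

theorem transpose_schur_eq_neg {m n : Type*} [Fintype m] [DecidableEq m] {A : Matrix m m R}
    {B : Matrix m n R} {C : Matrix n m R} {D : Matrix n n R} [Invertible A]
    (h : (fromBlocks A B C D)ᵀ = -fromBlocks A B C D) :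
    (D - C * ⅟A * B)ᵀ = -(D - C * ⅟A * B) := by
  rw [fromBlocks_transpose, fromBlocks_neg, fromBlocks_inj] at h
  obtain ⟨hA, hC, hB, hD⟩ := h
  rw [transpose_sub, transpose_mul, transpose_mul, hD, hB, transpose_invOf_eq_neg hA, hC]
  simp only [Matrix.neg_mul, Matrix.mul_neg, neg_neg, Matrix.mul_assoc]
  abel

theorem diag_eq_zero_of_transpose_eq_neg [NeZero (2 : K)] {n : Type*} {S : Matrix n n K}
    (hS : Sᵀ = -S) (i : n) : S i i = 0 := by
  have hii := congrFun (congrFun hS i) i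
  simp only [transpose_apply, neg_apply] at hii
  have h : (2 : K) * S i i = 0 := by linear_combination hii
  exact (mul_eq_zero.mp h).resolve_left two_ne_zero

theorem isSquare_det_of_transpose_eq_neg [NeZero (2 : K)] {n : Type*} [Fintype n]
    [DecidableEq n] (S : Matrix n n K) (hS : Sᵀ = -S) : IsSquare S.det := by
  induction hk : Fintype.card n using Nat.strong_induction_on generalizing n with
  | _ k ih =>
  by_cases hzero : S = 0
  · rcases isEmpty_or_nonempty n with hn | hn
    · simp
    · simp [hzero]
  obtain ⟨i, j, hij⟩ : ∃ i j, S i j ≠ 0 := by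
    by_contra! h
    exact hzero (ext h)
  have hdiag := diag_eq_zero_of_transpose_eq_neg hS
  have hne : i ≠ j := by rintro rfl; exact hij (hdiag i)
  -- Split off the rows and columns `i, j`: the pivot block `!![0, S i j; -S i j, 0]` is
  -- invertible, and its Schur complement is again skew-symmetric, of size two less.
  set e := Equiv.finTwoSumOfNe hne
  set T := S.submatrix e e with hT_def
  have hT : (fromBlocks T.toBlocks₁₁ T.toBlocks₁₂ T.toBlocks₂₁ T.toBlocks₂₂)ᵀ =
      -fromBlocks T.toBlocks₁₁ T.toBlocks₁₂ T.toBlocks₂₁ T.toBlocks₂₂ := by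
    rw [fromBlocks_toBlocks, hT_def, transpose_submatrix, hS]
    rfl
  have hdet_pivot : T.toBlocks₁₁.det = S i j * S i j := by
    have hji : S j i = -S i j := congrFun (congrFun hS i) j
    simp [det_fin_two, toBlocks₁₁, T, e, Equiv.finTwoSumOfNe, hdiag, hji]
  have : Invertible T.toBlocks₁₁ :=
    invertibleOfIsUnitDet _ (hdet_pivot ▸ (mul_ne_zero hij hij).isUnit)
  have hcard : Fintype.card {x // x ≠ i ∧ x ≠ j} < k := by
    have := Fintype.card_congr e
    simp only [Fintype.card_sum, Fintype.card_fin] at this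
    omega
  obtain ⟨d, hd⟩ := ih _ hcard _ (transpose_schur_eq_neg hT) rfl
  rw [← det_submatrix_equiv_self e, ← fromBlocks_toBlocks (S.submatrix e e), det_fromBlocks₁₁]
  exact ⟨S i j * d, by rw [hdet_pivot, hd]; ring⟩

end Skew

variable {n : Type*} [Fintype n] [DecidableEq n]

theorem charpoly_eq_cyclotomic_of_pow_eq_one {p : ℕ} [Fact p.Prime]
    (hn : Fintype.card n = p - 1) {B : Matrix n n ℚ} (hB1 : B ≠ 1) (hBp : B ^ p = 1) :
    B.charpoly = cyclotomic p ℚ := by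
  have hp : p.Prime := Fact.out
  have hdvd : cyclotomic p ℚ ∣ minpoly ℚ B := by
    by_contra h
    have hcop : IsCoprime (minpoly ℚ B) (cyclotomic p ℚ) :=
      ((cyclotomic.irreducible_rat hp.pos).coprime_iff_not_dvd.mpr h).symm
    have hX : minpoly ℚ B ∣ X - 1 := hcop.dvd_of_dvd_mul_left <| by
      rw [cyclotomic_prime_mul_X_sub_one]
      exact minpoly.dvd ℚ B (by simp [hBp])
    have := aeval_eq_zero_of_dvd_aeval_eq_zero hX (minpoly.aeval ℚ B)
    exact hB1 (by simpa [sub_eq_zero] using this)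
  refine eq_of_monic_of_dvd_of_natDegree_le (cyclotomic.monic p ℚ) B.charpoly_monic
    (hdvd.trans (minpoly_dvd_charpoly B)) ?_
  rw [charpoly_natDegree_eq_dim, natDegree_cyclotomic, Nat.totient_prime hp, hn]

theorem det_one_sub_eq_prime {p : ℕ} [Fact p.Prime]
    (hn : Fintype.card n = p - 1) {B : Matrix n n ℚ} (hB1 : B ≠ 1) (hBp : B ^ p = 1) :
    (1 - B).det = p := by
  rw [← eval_one_cyclotomic_prime, ← charpoly_eq_cyclotomic_of_pow_eq_one hn hB1 hBp,
    eval_charpoly, scalar_apply, diagonal_one]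

theorem transpose_mul_sub_eq_neg {R : Type*} [CommRing R] {M A B : Matrix n n R}
    (hM : Mᵀ = M) (hA : Aᵀ * M * A = M) (hAB : A * B = 1) :
    (M * (B - A))ᵀ = -(M * (B - A)) := by
  have hAM : Aᵀ * M = M * B := calc
    Aᵀ * M = Aᵀ * M * (A * B) := by rw [hAB, Matrix.mul_one]
    _ = M * B := by rw [← Matrix.mul_assoc, hA]
  have hBM : Bᵀ * M = M * A := calc
    Bᵀ * M = Bᵀ * (Aᵀ * M * A) := by rw [hA]
    _ = M * A := by
      rw [← Matrix.mul_assoc, ← Matrix.mul_assoc, ← transpose_mul, hAB, transpose_one,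
        Matrix.one_mul]
  rw [transpose_mul, hM, transpose_sub, Matrix.sub_mul, hAM, hBM, mul_sub, neg_sub]

theorem det_eq_one_of_pow_eq_one_of_odd {R : Type*} [CommRing R] [LinearOrder R]
    [IsStrictOrderedRing R] {p : ℕ} (hodd : Odd p) {A : Matrix n n R} (hAp : A ^ p = 1) :
    A.det = 1 := by
  have h : A.det ^ p = 1 := by rw [← det_pow, hAp, det_one]
  rcases (pow_eq_one_iff_of_ne_zero hodd.pos.ne').mp h with h1 | ⟨_, heven⟩
  · exact h1
  · exact absurd heven (Nat.not_even_iff_odd.mpr hodd)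

theorem isSquare_det_mul_prime_of_isometry {p : ℕ} [Fact p.Prime] (hodd : Odd p)
    (hn : Fintype.card n = p - 1) {M A : Matrix n n ℚ} (hM : Mᵀ = M) (hA : Aᵀ * M * A = M)
    (hA1 : A ≠ 1) (hAp : A ^ p = 1) : IsSquare (M.det * p) := by
  obtain ⟨k, rfl⟩ := hodd
  have hAB : A * A ^ (2 * k) = 1 := by rw [← pow_succ', hAp]
  have hA2 : A ^ 2 ≠ 1 := fun h ↦ hA1 <| calc
    A = (A ^ 2) ^ k * A := by rw [h, one_pow, Matrix.one_mul]
    _ = 1 := by rw [← pow_mul, ← pow_succ, hAp]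
  have hA2p : (A ^ 2) ^ (2 * k + 1) = 1 := by rw [← pow_mul, mul_comm, pow_mul, hAp, one_pow]
  have hfactor : A ^ (2 * k) - A = A ^ (2 * k) * (1 - A ^ 2) := by
    rw [mul_sub, Matrix.mul_one, ← pow_add, pow_succ, hAp, Matrix.one_mul]
  have := isSquare_det_of_transpose_eq_neg _ (transpose_mul_sub_eq_neg hM hA hAB)
  rwa [hfactor, det_mul, det_mul, det_pow, det_eq_one_of_pow_eq_one_of_odd ⟨k, rfl⟩ hAp,
    one_pow, one_mul, det_one_sub_eq_prime hn hA2 hA2p] at this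

end Matrix

theorem stmt_13_general (p : ℕ) (hp : p.Prime) (hodd : Odd p)
    (M : Matrix (Fin (p - 1)) (Fin (p - 1)) ℤ) (hs : M.IsSymm)
    (g : Matrix (Fin (p - 1)) (Fin (p - 1)) ℤ) (hg1 : g ≠ 1) (hgp : g ^ p = 1)
    (hiso : gᵀ * M * g = M) :
    ∃ q : ℚ, (|M.det| : ℚ) / (p : ℚ) ^ (p - 2) = q ^ 2 := by
  have : Fact p.Prime := ⟨hp⟩
  set φ := (Int.castRingHom ℚ).mapMatrix (m := Fin (p - 1))
  have hφ (X : Matrix (Fin (p - 1)) (Fin (p - 1)) ℤ) : (φ X)ᵀ = φ Xᵀ := (transpose_map ..).symm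
  obtain ⟨t, ht⟩ := isSquare_det_mul_prime_of_isometry hodd (Fintype.card_fin _)
    (M := φ M) (A := φ g) (by rw [hφ, hs.eq]) (by rw [hφ, ← map_mul, ← map_mul, hiso])
    (fun h ↦ hg1 (map_injective Int.cast_injective (h.trans (map_one φ).symm)))
    (by rw [← map_pow, hgp, map_one])
  rw [← RingHom.map_det, eq_intCast] at ht
  have habs : |(M.det : ℚ)| * p = t ^ 2 := by
    rw [← Nat.abs_cast (R := ℚ), ← abs_mul, ht, ← sq, abs_sq]
  obtain ⟨k, hpk⟩ := hodd
  have hk : p - 2 + 1 = 2 * k := by have := hp.two_le; omega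
  refine ⟨t / (p : ℚ) ^ k, ?_⟩
  have hp0 : (p : ℚ) ≠ 0 := by exact_mod_cast hp.ne_zero
  rw [div_pow, ← habs, ← pow_mul, mul_comm k, ← hk, pow_succ, mul_div_mul_right _ _ hp0]

/-- If a lattice of rank `p - 1` (with Gram matrix `M`) carries a non-trivial isometry `g` of
order `p`, where `p` is an odd prime, then `|det M| / p^(p-2)` is a square in `ℚ`. -/
theorem stmt_13 (p : ℕ) (hp : p.Prime) (hodd : Odd p)
    (M : Matrix (Fin (p - 1)) (Fin (p - 1)) ℤ) (hs : M.IsSymm) (hdet : M.det ≠ 0)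
    (g : Matrix (Fin (p - 1)) (Fin (p - 1)) ℤ) (hg1 : g ≠ 1) (hgp : g ^ p = 1)
    (hiso : gᵀ * M * g = M) :
    ∃ q : ℚ, (|M.det| : ℚ) / (p : ℚ) ^ (p - 2) = q ^ 2 :=
  stmt_13_general p hp hodd M hs g hg1 hgp hiso
end

section
/- Let ζ₅ = e^{2πi/5}, let Λ ⊆ ℂ² be the ℤ-span of the four vectors (1,1), (ζ₅, ζ₅²), (ζ₅², ζ₅⁴), (ζ₅³, ζ₅), and let σ(z,w) = (ζ₅ z, ζ₅² w), so that σ(Λ) = Λ. Then the automorphism of the quotient group ℂ²/Λ induced by σ has exactly 5 fixed points; equivalently, the quotient group Λ/(σ−id)(Λ) has exactly 5 elements. -/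
/-!
Let `K = ℚ(η)` be the `p`-th cyclotomic field and `φ, ψ : K → ℂ` the embeddings with `φ η = ζ`,
`ψ η = ζ ^ k`. Then `x ↦ (φ x, ψ x)` maps `𝓞 K = ℤ[η]` isomorphically onto the lattice spanned by
the `(ζ ^ i, ζ ^ (k * i))`, `i < p - 1`, and turns `σ - id` into multiplication by `η - 1`. So the
quotient is `𝓞 K ⧸ (η - 1)`, whose order is the norm `|N(η - 1)| = p`.
-/

open NumberField Polynomial

theorem LinearMap.range_eq_span_range_comp_basis {R M N ι : Type*} [Semiring R] [AddCommMonoid M]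
    [AddCommMonoid N] [Module R M] [Module R N] (g : M →ₗ[R] N) (b : Module.Basis ι R M) :
    LinearMap.range g = Submodule.span R (Set.range (g ∘ b)) := by
  rw [LinearMap.range_eq_map, ← b.span_eq, Submodule.map_span, ← Set.range_comp]

section Intertwining

variable {R V : Type*} [CommRing R] [AddCommGroup V] {E : R →ₗ[ℤ] V} {f : V →ₗ[ℤ] V} {a : R}

theorem LinearMap.apply_mem_range_of_intertwines (hf : ∀ x, f (E x) = E (a * x)) :
    ∀ v ∈ LinearMap.range E, f v ∈ LinearMap.range E := by
  rintro _ ⟨x, rfl⟩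
  exact ⟨a * x, (hf x).symm⟩

theorem LinearMap.natCard_quotient_range_restrict_of_intertwines (hE : Function.Injective E)
    (hf : ∀ x, f (E x) = E (a * x)) (hmap : ∀ v ∈ LinearMap.range E, f v ∈ LinearMap.range E) :
    Nat.card (LinearMap.range E ⧸ LinearMap.range (f.restrict hmap)) =
      Nat.card (R ⧸ Ideal.span {a}) := by
  let e : R ≃ₗ[ℤ] LinearMap.range E := LinearEquiv.ofInjective E hE
  have hcomm : (e : R →ₗ[ℤ] _) ∘ₗ LinearMap.mulLeft ℤ a = f.restrict hmap ∘ₗ e := by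
    ext x
    simp [e, hf]
  have hspan : (Ideal.span {a}).restrictScalars ℤ = LinearMap.range (LinearMap.mulLeft ℤ a) := by
    ext x
    simp [Ideal.mem_span_singleton', mul_comm]
  have hmapeq : ((Ideal.span {a}).restrictScalars ℤ).map (e : R →ₗ[ℤ] _) =
      LinearMap.range (f.restrict hmap) := by
    rw [hspan, ← LinearMap.range_comp, hcomm, LinearMap.range_comp_of_range_eq_top _ e.range]
  rw [← Nat.card_congr (Submodule.Quotient.equiv _ _ e hmapeq).toEquiv,
    Nat.card_congr (Submodule.Quotient.restrictScalarsEquiv ℤ (Ideal.span {a})).toEquiv]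

end Intertwining

theorem IsPrimitiveRoot.exists_algHom_apply_eq {n : ℕ} [NeZero n] {K C : Type*} [Field K]
    [CharZero K] [IsCyclotomicExtension {n} ℚ K] [CommRing C] [IsDomain C] [Algebra ℚ C]
    {η : K} (hη : IsPrimitiveRoot η n) {ξ : C} (hξ : IsPrimitiveRoot ξ n) :
    ∃ φ : K →ₐ[ℚ] C, φ η = ξ := by
  let e := hη.embeddingsEquivPrimitiveRoots C (cyclotomic.irreducible_rat (NeZero.pos n))
  refine ⟨e.symm ⟨ξ, (mem_primitiveRoots (NeZero.pos n)).2 hξ⟩, ?_⟩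
  exact congrArg Subtype.val (e.apply_symm_apply _)

theorem IsPrimitiveRoot.natCard_quotient_toInteger_sub_one_of_prime_ne_two {p : ℕ} [Fact p.Prime]
    (hp : p ≠ 2) {K : Type*} [Field K] [NumberField K] [IsCyclotomicExtension {p} ℚ K] {η : K}
    (hη : IsPrimitiveRoot η p) :
    Nat.card (𝓞 K ⧸ Ideal.span {hη.toInteger - 1}) = p := by
  rw [hη.card_quotient_toInteger_sub_one, hη.norm_toInteger_sub_one_of_prime_ne_two' hp,
    Int.natAbs_natCast]

theorem exists_mapsTo_natCard_quotient_eq_prime_of_cyclotomic_lattice {p : ℕ} [Fact p.Prime]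
    (hp : p ≠ 2) {ζ : ℂ} (hζ : IsPrimitiveRoot ζ p) {k : ℕ} (hk : k.Coprime p) {Λ : Submodule ℤ (ℂ × ℂ)}
    (hΛ : Λ = Submodule.span ℤ (Set.range fun i : Fin (p - 1) => (ζ ^ (i : ℕ), (ζ ^ k) ^ (i : ℕ))))
    {f : (ℂ × ℂ) →ₗ[ℤ] (ℂ × ℂ)} (hf : ∀ z w, f (z, w) = ((ζ - 1) * z, (ζ ^ k - 1) * w)) :
    ∃ hmap : ∀ x ∈ Λ, f x ∈ Λ, Nat.card (Λ ⧸ LinearMap.range (f.restrict hmap)) = p := by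
  let K := CyclotomicField p ℚ
  have : IsCyclotomicExtension {p} ℚ K := CyclotomicField.isCyclotomicExtension p ℚ
  have : NumberField K := IsCyclotomicExtension.numberField {p} ℚ K
  have hη := IsCyclotomicExtension.zeta_spec p ℚ K
  obtain ⟨φ, hφ⟩ := hη.exists_algHom_apply_eq hζ
  obtain ⟨ψ, hψ⟩ := hη.exists_algHom_apply_eq (hζ.pow_of_coprime k hk)
  let E : 𝓞 K →ₗ[ℤ] ℂ × ℂ :=
    ((φ.toRingHom.prod ψ.toRingHom).comp (algebraMap (𝓞 K) K)).toAddMonoidHom.toIntLinearMap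
  have hE : Function.Injective E := fun x y hxy ↦
    RingOfIntegers.coe_injective (φ.injective (congrArg Prod.fst hxy))
  have hcoe : algebraMap (𝓞 K) K hη.toInteger = IsCyclotomicExtension.zeta p ℚ K := rfl
  have hfE : ∀ x, f (E x) = E ((hη.toInteger - 1) * x) := by
    intro x
    simp [E, hf, hφ, hψ, hcoe]
  have hrange : LinearMap.range E = Λ := by
    let pb := hη.integralPowerBasis
    have hdim : pb.dim = p - 1 := by simp [pb, Nat.totient_prime Fact.out]
    have hbasis : E ∘ pb.basis = fun i : Fin pb.dim ↦ (ζ ^ (i : ℕ), (ζ ^ k) ^ (i : ℕ)) := by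
      ext i <;> simp [pb, E, hφ, hψ, hcoe]
    rw [hΛ, E.range_eq_span_range_comp_basis pb.basis, hbasis, hdim]
  subst hrange
  refine ⟨LinearMap.apply_mem_range_of_intertwines hfE, ?_⟩
  rw [E.natCard_quotient_range_restrict_of_intertwines hE hfE,
    hη.natCard_quotient_toInteger_sub_one_of_prime_ne_two hp]

/-- Let `ζ₅ = exp(2πi/5)`, let `Λ` be the `ℤ`-span of `(1,1)`, `(ζ₅,ζ₅²)`, `(ζ₅²,ζ₅⁴)`,
`(ζ₅³,ζ₅)`, and let `σ(z,w) = (ζ₅z, ζ₅²w)`. Then `(σ - id)(Λ) ⊆ Λ` and the quotient group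
`Λ/(σ - id)(Λ)` has exactly 5 elements; equivalently, the automorphism of the torus `ℂ²/Λ`
induced by `σ` has exactly 5 fixed points. -/
theorem stmt_18 (ζ₅ : ℂ) (hζ : ζ₅ = Complex.exp (2 * Real.pi * Complex.I / 5))
    (Λ : Submodule ℤ (ℂ × ℂ))
    (hΛ : Λ = Submodule.span ℤ
        ({((1 : ℂ), (1 : ℂ)), (ζ₅, ζ₅ ^ 2), (ζ₅ ^ 2, ζ₅ ^ 4), (ζ₅ ^ 3, ζ₅)} : Set (ℂ × ℂ)))
    (σ : (ℂ × ℂ) ≃ₗ[ℂ] (ℂ × ℂ))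
    (hσ : ∀ z w : ℂ, σ (z, w) = (ζ₅ * z, ζ₅ ^ 2 * w))
    (f : (ℂ × ℂ) →ₗ[ℤ] (ℂ × ℂ))
    (hf : f = ((σ.restrictScalars ℤ : (ℂ × ℂ) ≃ₗ[ℤ] (ℂ × ℂ)) : (ℂ × ℂ) →ₗ[ℤ] (ℂ × ℂ))
      - LinearMap.id) :
    (∀ x ∈ Λ, f x ∈ Λ) ∧
    ∀ (hmap : ∀ x ∈ Λ, f x ∈ Λ),
      Nat.card (↥Λ ⧸ LinearMap.range (f.restrict hmap)) = 5 := by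
  have : Fact (Nat.Prime 5) := ⟨by norm_num⟩
  have hprim : IsPrimitiveRoot ζ₅ 5 := by
    simpa [hζ] using Complex.isPrimitiveRoot_exp 5 (by norm_num)
  have hgens : Set.range (fun i : Fin (5 - 1) ↦ (ζ₅ ^ (i : ℕ), (ζ₅ ^ 2) ^ (i : ℕ))) =
      {((1 : ℂ), (1 : ℂ)), (ζ₅, ζ₅ ^ 2), (ζ₅ ^ 2, ζ₅ ^ 4), (ζ₅ ^ 3, ζ₅)} := by
    have h6 : ζ₅ ^ 6 = ζ₅ := by linear_combination ζ₅ * hprim.pow_eq_one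
    ext v
    simp [Fin.exists_fin_succ, eq_comm, h6, ← pow_mul]
  have hf' : ∀ z w, f (z, w) = ((ζ₅ - 1) * z, (ζ₅ ^ 2 - 1) * w) := fun z w ↦ by
    simp [hf, hσ, sub_mul]
  obtain ⟨hmap, hcard⟩ := exists_mapsTo_natCard_quotient_eq_prime_of_cyclotomic_lattice
    (by norm_num) hprim (by norm_num) (hΛ.trans (congrArg _ hgens.symm)) hf'
  exact ⟨hmap, fun _ ↦ hcard⟩
end
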